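/- arXiv:2603.30034 — 6 statements merged into one kernel-verified Lean document; each statement's English description precedes it below -/
import Mathlib

section
/- Let x be a finite set of d features, 1 ≤ k ≤ d−1, h a classifier on subsets of x with fixed label ŷ, and for feature l and integer m with k ≤ m ≤ d−1 define the unregularized marginal contribution Δ_l(m) = Σ_{S ⊆ x\{l}, |S|=m} [p_ŷ(S∪{l}) − p_ŷ(S)], where p_ŷ(T) = (1/C(|T|,k)) · (number of k-subsets z of T with h(z)=ŷ) whenever |T| ≥ k. Then Δ_l(m) = (C(d−k, m−k+1)/C(m+1,k)) · A_l − (1/C(m,k) − 1/C(m+1,k)) · C(d−1−k, m−k) · B_l, where A_l is the number of k-subsets of x containing l with h(z)=ŷ and B_l is the number of k-subsets of x avoiding l with h(z)=ŷ. -/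
/-- Number of `m`-subsets of `D` containing a fixed subset `t`. -/
lemma count_supersets {α : Type*} [DecidableEq α] (D t : Finset α) (m : ℕ)
    (ht : t ⊆ D) (hm : t.card ≤ m) :
    ((D.powersetCard m).filter (fun S => t ⊆ S)).card
      = (D.card - t.card).choose (m - t.card) := by
  have key : (D.card - t.card).choose (m - t.card)
      = ((D \ t).powersetCard (m - t.card)).card := by
    rw [Finset.card_powersetCard, Finset.card_sdiff_of_subset ht]
  rw [key]
  apply Finset.card_bij (fun S _ => S \ t)
  · intro S hS
    simp only [Finset.mem_filter, Finset.mem_powersetCard] at hS ⊢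
    obtain ⟨⟨hSD, hScard⟩, htS⟩ := hS
    refine ⟨fun a ha => ?_, ?_⟩
    · simp only [Finset.mem_sdiff] at ha ⊢
      exact ⟨hSD ha.1, ha.2⟩
    · rw [Finset.card_sdiff_of_subset htS, hScard]
  · intro S hS S' hS' hEq
    simp only [Finset.mem_filter, Finset.mem_powersetCard] at hS hS'
    have : S \ t ∪ t = S' \ t ∪ t := by rw [hEq]
    rwa [Finset.sdiff_union_of_subset hS.2, Finset.sdiff_union_of_subset hS'.2] at this
  · intro U hU
    simp only [Finset.mem_powersetCard] at hU
    obtain ⟨hUD, hUcard⟩ := hU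
    have hdisj : Disjoint U t := by
      refine Finset.disjoint_left.mpr fun a ha hat => ?_
      exact (Finset.mem_sdiff.mp (hUD ha)).2 hat
    refine ⟨U ∪ t, ?_, ?_⟩
    · simp only [Finset.mem_filter, Finset.mem_powersetCard]
      refine ⟨⟨Finset.union_subset (hUD.trans Finset.sdiff_subset) ht, ?_⟩,
        Finset.subset_union_right⟩
      rw [Finset.card_union_of_disjoint hdisj, hUcard]
      omega
    · rw [Finset.union_sdiff_cancel_right hdisj]

/-- Double counting: summing, over all `m`-subsets `S` of `D`, the number of `z ∈ F`
with `f z ⊆ S`, where each `f z` is a `j`-subset of `D`. -/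
lemma sum_count {α : Type*} [DecidableEq α] (D : Finset α) (m j : ℕ)
    (F : Finset (Finset α)) (f : Finset α → Finset α)
    (hF : ∀ z ∈ F, f z ⊆ D ∧ (f z).card = j) (hjm : j ≤ m) :
    ∑ S ∈ D.powersetCard m, ((F.filter (fun z => f z ⊆ S)).card)
      = F.card * ((D.card - j).choose (m - j)) := by
  have h1 : ∀ S : Finset α, (F.filter (fun z => f z ⊆ S)).card
      = ∑ z ∈ F, if f z ⊆ S then 1 else 0 := fun S => Finset.card_filter _ _
  simp_rw [h1]
  rw [Finset.sum_comm]
  have h2 : ∀ z ∈ F, (∑ S ∈ D.powersetCard m, if f z ⊆ S then 1 else 0)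
      = (D.card - j).choose (m - j) := by
    intro z hz
    obtain ⟨hzD, hzcard⟩ := hF z hz
    rw [← Finset.card_filter]
    rw [count_supersets D (f z) m hzD (hzcard ▸ hjm), hzcard]
  rw [Finset.sum_congr rfl h2, Finset.sum_const, smul_eq_mul]

/-- Closed form of the unregularized marginal contribution `Δ_l(m)` for `k ≤ m ≤ d-1`:
`Δ_l(m) = (C(d-k, m-k+1)/C(m+1,k)) · A_l − (1/C(m,k) − 1/C(m+1,k)) · C(d-1-k, m-k) · B_l`. -/
theorem marginal_contribution_closed_form {α L : Type*} [DecidableEq α] [DecidableEq L]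
    (x : Finset α) (d k m : ℕ) (h : Finset α → L) (yhat : L) (l : α)
    (p : Finset α → ℝ)
    (hd : x.card = d) (hl : l ∈ x) (hk1 : 1 ≤ k) (hkd : k ≤ d - 1)
    (hkm : k ≤ m) (hmd : m ≤ d - 1)
    (hp : ∀ T : Finset α, T ⊆ x → k ≤ T.card →
      p T = (((T.powersetCard k).filter (fun z => h z = yhat)).card : ℝ) /
        (T.card.choose k)) :
    ∑ S ∈ (x.erase l).powersetCard m, (p (insert l S) - p S)
    = (((d - k).choose (m - k + 1) : ℝ) / ((m + 1).choose k)) *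
        (((x.powersetCard k).filter (fun z => l ∈ z ∧ h z = yhat)).card : ℝ)
      - ((1 / (m.choose k) : ℝ) - 1 / ((m + 1).choose k)) *
        ((d - 1 - k).choose (m - k) : ℝ) *
        (((x.powersetCard k).filter (fun z => l ∉ z ∧ h z = yhat)).card : ℝ) := by
  set D := x.erase l with hD
  have hDcard : D.card = d - 1 := by rw [hD, Finset.card_erase_of_mem hl, hd]
  have hd1 : 1 ≤ d := by omega
  set FA := (x.powersetCard k).filter (fun z => l ∈ z ∧ h z = yhat) with hFA
  set FB := (x.powersetCard k).filter (fun z => l ∉ z ∧ h z = yhat) with hFB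
  -- facts about S in the sum
  have hSfacts : ∀ S ∈ D.powersetCard m, S ⊆ D ∧ S.card = m ∧ l ∉ S := by
    intro S hS
    rw [Finset.mem_powersetCard] at hS
    exact ⟨hS.1, hS.2, fun hlS => (Finset.mem_erase.mp (hS.1 hlS)).1 rfl⟩
  -- rewrite each summand
  have step1 : ∀ S ∈ D.powersetCard m,
      p (insert l S) - p S
      = ((FA.filter (fun z => z.erase l ⊆ S)).card : ℝ) / ((m + 1).choose k)
        + ((FB.filter (fun z => z ⊆ S)).card : ℝ) / ((m + 1).choose k)
        - ((FB.filter (fun z => z ⊆ S)).card : ℝ) / (m.choose k) := by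
    intro S hS
    obtain ⟨hSD, hScard, hlS⟩ := hSfacts S hS
    have hSx : S ⊆ x := hSD.trans (Finset.erase_subset _ _)
    have hins : insert l S ⊆ x := Finset.insert_subset hl hSx
    have hinscard : (insert l S).card = m + 1 := by
      rw [Finset.card_insert_of_notMem hlS, hScard]
    rw [hp (insert l S) hins (by rw [hinscard]; omega), hp S hSx (by rw [hScard]; exact hkm),
      hinscard, hScard]
    -- split the filter over insert l S by membership of l
    have hsplit : (((insert l S).powersetCard k).filter (fun z => h z = yhat)).card
        = (FA.filter (fun z => z.erase l ⊆ S)).card + (FB.filter (fun z => z ⊆ S)).card := by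
      have e1 : ((insert l S).powersetCard k).filter (fun z => h z = yhat)
          = (FA.filter (fun z => z.erase l ⊆ S)) ∪ (FB.filter (fun z => z ⊆ S)) := by
        ext z
        simp only [Finset.mem_filter, Finset.mem_powersetCard, Finset.mem_union, hFA, hFB]
        constructor
        · rintro ⟨⟨hzs, hzc⟩, hzh⟩
          by_cases hlz : l ∈ z
          · left
            refine ⟨⟨⟨hzs.trans hins, hzc⟩, hlz, hzh⟩, ?_⟩
            intro a ha
            have ha' := Finset.mem_erase.mp ha
            rcases Finset.mem_insert.mp (hzs ha'.2) with h1 | h1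
            · exact absurd h1 ha'.1
            · exact h1
          · right
            refine ⟨⟨⟨hzs.trans hins, hzc⟩, hlz, hzh⟩, fun a ha => ?_⟩
            rcases Finset.mem_insert.mp (hzs ha) with h1 | h1
            · exact absurd (h1 ▸ ha) hlz
            · exact h1
        · rintro (⟨⟨⟨hzx, hzc⟩, hlz, hzh⟩, hsub⟩ | ⟨⟨⟨hzx, hzc⟩, hlz, hzh⟩, hsub⟩)
          · refine ⟨⟨fun a ha => ?_, hzc⟩, hzh⟩
            by_cases hal : a = l
            · exact hal ▸ Finset.mem_insert_self l S
            · exact Finset.mem_insert_of_mem (hsub (Finset.mem_erase.mpr ⟨hal, ha⟩))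
          · exact ⟨⟨hsub.trans (Finset.subset_insert l S), hzc⟩, hzh⟩
      have e2 : Disjoint (FA.filter (fun z => z.erase l ⊆ S)) (FB.filter (fun z => z ⊆ S)) := by
        refine Finset.disjoint_left.mpr fun z hz1 hz2 => ?_
        simp only [Finset.mem_filter, hFA, hFB] at hz1 hz2
        exact hz2.1.2.1 hz1.1.2.1
      rw [e1, Finset.card_union_of_disjoint e2]
    have hB : ((S.powersetCard k).filter (fun z => h z = yhat))
        = FB.filter (fun z => z ⊆ S) := by
      ext z
      simp only [Finset.mem_filter, Finset.mem_powersetCard, hFB]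
      constructor
      · rintro ⟨⟨hzs, hzc⟩, hzh⟩
        exact ⟨⟨⟨hzs.trans hSx, hzc⟩, fun hlz => hlS (hzs hlz), hzh⟩, hzs⟩
      · rintro ⟨⟨⟨hzx, hzc⟩, hlz, hzh⟩, hsub⟩
        exact ⟨⟨hsub, hzc⟩, hzh⟩
    rw [hsplit, hB]
    push_cast
    ring
  rw [Finset.sum_congr rfl step1]
  -- split the sum
  rw [Finset.sum_sub_distrib, Finset.sum_add_distrib, ← Finset.sum_div, ← Finset.sum_div,
    ← Finset.sum_div]
  -- compute the three sums via double counting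
  have hsumA : ∑ S ∈ D.powersetCard m, ((FA.filter (fun z => z.erase l ⊆ S)).card : ℝ)
      = (FA.card : ℝ) * ((d - k).choose (m - k + 1) : ℝ) := by
    have := sum_count D m (k - 1) FA (fun z => z.erase l) ?_ (by omega)
    · rw [← Nat.cast_sum]
      rw [this]
      rw [hDcard]
      have : d - 1 - (k - 1) = d - k := by omega
      rw [this]
      have : m - (k - 1) = m - k + 1 := by omega
      rw [this]
      push_cast
      ring
    · intro z hz
      simp only [Finset.mem_filter, Finset.mem_powersetCard, hFA] at hz
      obtain ⟨⟨hzx, hzc⟩, hlz, _⟩ := hz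
      constructor
      · intro a ha
        have ha' := Finset.mem_erase.mp ha
        exact Finset.mem_erase.mpr ⟨ha'.1, hzx ha'.2⟩
      · rw [Finset.card_erase_of_mem hlz, hzc]
  have hsumB : ∑ S ∈ D.powersetCard m, ((FB.filter (fun z => z ⊆ S)).card : ℝ)
      = (FB.card : ℝ) * ((d - 1 - k).choose (m - k) : ℝ) := by
    have := sum_count D m k FB (fun z => z) ?_ hkm
    · rw [← Nat.cast_sum, this, hDcard]
      push_cast
      ring
    · intro z hz
      simp only [Finset.mem_filter, Finset.mem_powersetCard, hFB] at hz
      obtain ⟨⟨hzx, hzc⟩, hlz, _⟩ := hz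
      exact ⟨fun a ha => Finset.mem_erase.mpr ⟨fun h' => hlz (h' ▸ ha), hzx ha⟩, hzc⟩
  rw [hsumA, hsumB]
  ring
end

section
/- Under the setting of the random subspace method with feature set x of size d, subsample size 1 ≤ k ≤ d−1, classifier h, and label ŷ: for any two features i, j ∈ x and any m with k ≤ m ≤ d−1, if A_i ≥ A_j (where A_l counts k-subsets containing l classified as ŷ), then Δ_i(m) ≥ Δ_j(m), where Δ_l(m) = Σ_{S ⊆ x\{l}, |S|=m} [p_ŷ(S∪{l}) − p_ŷ(S)] is the unregularized marginal contribution. (Order consistency of the importance score with the size-m marginal contributions.) -/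
open Finset

/-- Number of `n`-subsets of `u` containing a fixed subset `z`. -/
theorem aux_card_supersets {α : Type*} [DecidableEq α] {u z : Finset α} (hz : z ⊆ u)
    {n : ℕ} (hn : z.card ≤ n) :
    ((u.powersetCard n).filter fun S => z ⊆ S).card = (u.card - z.card).choose (n - z.card) := by
  rw [← Finset.card_sdiff_of_subset hz, ← Finset.card_powersetCard]
  refine Finset.card_bij' (fun S _ => S \ z) (fun t _ => t ∪ z) ?_ ?_ ?_ ?_
  · intro S hS
    simp only [mem_filter, mem_powersetCard] at hS ⊢
    obtain ⟨⟨hSu, hSc⟩, hzS⟩ := hS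
    exact ⟨sdiff_subset_sdiff hSu Subset.rfl, by rw [card_sdiff_of_subset hzS, hSc]⟩
  · intro t ht
    simp only [mem_filter, mem_powersetCard] at ht ⊢
    obtain ⟨htu, htc⟩ := ht
    have hdisj : Disjoint t z := disjoint_of_subset_left htu sdiff_disjoint
    refine ⟨⟨union_subset (htu.trans sdiff_subset) hz, ?_⟩, subset_union_right⟩
    rw [card_union_of_disjoint hdisj, htc]
    omega
  · intro S hS
    simp only [mem_filter, mem_powersetCard] at hS
    exact sdiff_union_of_subset hS.2
  · intro t ht
    simp only [mem_filter, mem_powersetCard] at ht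
    exact union_sdiff_cancel_right (disjoint_of_subset_left ht.1 sdiff_disjoint)

/-- Double counting: summing, over all `n`-subsets `S` of `u`, the number of members of a
family `F` of `r`-subsets of `u` contained in `S`. -/
theorem aux_sum_card {α : Type*} [DecidableEq α] (u : Finset α) (F : Finset (Finset α))
    (r n : ℕ) (hr : r ≤ n) (hF : ∀ z ∈ F, z ⊆ u ∧ z.card = r) :
    ∑ S ∈ u.powersetCard n, ((F.filter fun z => z ⊆ S).card)
      = F.card * (u.card - r).choose (n - r) := by
  simp_rw [Finset.card_filter]
  rw [Finset.sum_comm]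
  calc ∑ z ∈ F, ∑ S ∈ u.powersetCard n, (if z ⊆ S then 1 else 0)
      = ∑ _z ∈ F, (u.card - r).choose (n - r) := by
        refine Finset.sum_congr rfl fun z hz => ?_
        obtain ⟨h1, h2⟩ := hF z hz
        rw [← Finset.card_filter, aux_card_supersets h1 (h2 ▸ hr), h2]
    _ = F.card * (u.card - r).choose (n - r) := by
        rw [Finset.sum_const, smul_eq_mul]

theorem aux_delta {α L : Type*} [DecidableEq α] [DecidableEq L]
    (x : Finset α) (d k m : ℕ) (h : Finset α → L) (yhat : L) (l : α) (p : Finset α → ℝ)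
    (hd : x.card = d) (hl : l ∈ x) (hk1 : 1 ≤ k) (hkd : k ≤ d - 1)
    (hkm : k ≤ m) (hmd : m ≤ d - 1)
    (hp : ∀ T : Finset α, T ⊆ x → k ≤ T.card →
      p T = (((T.powersetCard k).filter (fun z => h z = yhat)).card : ℝ) /
        (T.card.choose k)) :
    ∑ S ∈ (x.erase l).powersetCard m, (p (insert l S) - p S)
      = ((((x.powersetCard k).filter fun z => l ∈ z ∧ h z = yhat).card : ℝ)
            * ((d - k).choose (m - k + 1))
          + (((x.powersetCard k).filter fun z => l ∉ z ∧ h z = yhat).card : ℝ)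
            * ((d - 1 - k).choose (m - k))) / ((m + 1).choose k)
        - (((x.powersetCard k).filter fun z => l ∉ z ∧ h z = yhat).card : ℝ)
            * ((d - 1 - k).choose (m - k)) / (m.choose k) := by
  have hdk : k + 1 ≤ d := by omega
  set u := x.erase l with hu
  have hucard : u.card = d - 1 := by rw [hu, card_erase_of_mem hl, hd]
  set F : Finset (Finset α) := (x.powersetCard k).filter (fun z => h z = yhat) with hF
  set Fin : Finset (Finset α) := (x.powersetCard k).filter (fun z => l ∈ z ∧ h z = yhat)
    with hFin
  set Fout : Finset (Finset α) := (x.powersetCard k).filter (fun z => l ∉ z ∧ h z = yhat)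
    with hFout
  -- basic facts about members of the powerset
  have hmem : ∀ S ∈ u.powersetCard m, S ⊆ u ∧ S.card = m := by
    intro S hS; exact mem_powersetCard.1 hS
  -- step 1: rewrite each summand via hp
  have hstep : ∀ S ∈ u.powersetCard m,
      p (insert l S) - p S
        = ((((insert l S).powersetCard k).filter (fun z => h z = yhat)).card : ℝ)
            / ((m + 1).choose k)
          - (((S.powersetCard k).filter (fun z => h z = yhat)).card : ℝ) / (m.choose k) := by
    intro S hS
    obtain ⟨hSu, hSm⟩ := hmem S hS
    have hlS : l ∉ S := fun hls => (notMem_erase l x) (hSu hls)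
    have hSx : S ⊆ x := hSu.trans (erase_subset l x)
    have hiSx : insert l S ⊆ x := insert_subset hl hSx
    have hci : (insert l S).card = m + 1 := by rw [card_insert_of_notMem hlS, hSm]
    rw [hp S hSx (hSm ▸ hkm), hp (insert l S) hiSx (by omega), hSm, hci]
  rw [Finset.sum_congr rfl hstep, Finset.sum_sub_distrib]
  -- identify counts with filters of global families
  have hNS : ∀ S ∈ u.powersetCard m,
      ((S.powersetCard k).filter (fun z => h z = yhat)).card
        = (Fout.filter fun z => z ⊆ S).card := by
    intro S hS
    obtain ⟨hSu, hSm⟩ := hmem S hS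
    have hlS : l ∉ S := fun hls => (notMem_erase l x) (hSu hls)
    have hSx : S ⊆ x := hSu.trans (erase_subset l x)
    congr 1
    ext z
    simp only [hFout, mem_filter, mem_powersetCard]
    have h1 : z ⊆ S → z ⊆ x := fun hzs => hzs.trans hSx
    have h2 : z ⊆ S → l ∉ z := fun hzs hlz => hlS (hzs hlz)
    tauto
  have hNiS : ∀ S ∈ u.powersetCard m,
      (((insert l S).powersetCard k).filter (fun z => h z = yhat)).card
        = ((Fin.image (fun z => z.erase l)).filter fun z => z ⊆ S).card
          + (Fout.filter fun z => z ⊆ S).card := by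
    intro S hS
    obtain ⟨hSu, hSm⟩ := hmem S hS
    have hlS : l ∉ S := fun hls => (notMem_erase l x) (hSu hls)
    have hSx : S ⊆ x := hSu.trans (erase_subset l x)
    have hiSx : insert l S ⊆ x := insert_subset hl hSx
    have e1 : ((insert l S).powersetCard k).filter (fun z => h z = yhat)
        = F.filter (fun z => z ⊆ insert l S) := by
      ext z
      simp only [hF, mem_filter, mem_powersetCard]
      have h1 : z ⊆ insert l S → z ⊆ x := fun hzs => hzs.trans hiSx
      tauto
    rw [e1]
    have e2 : (F.filter fun z => z ⊆ insert l S).card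
        = ((F.filter fun z => z ⊆ insert l S).filter (fun z => l ∈ z)).card
          + ((F.filter fun z => z ⊆ insert l S).filter (fun z => l ∉ z)).card :=
      (Finset.card_filter_add_card_filter_not _).symm
    have hFinF : (F.filter fun z => z ⊆ insert l S).filter (fun z => l ∈ z)
        = Fin.filter (fun z => z ⊆ insert l S) := by
      rw [hFin, hF, Finset.filter_filter, Finset.filter_filter, Finset.filter_filter]
      exact Finset.filter_congr fun z _ => by tauto
    have hFoutF : (F.filter fun z => z ⊆ insert l S).filter (fun z => l ∉ z)
        = Fout.filter (fun z => z ⊆ insert l S) := by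
      rw [hFout, hF, Finset.filter_filter, Finset.filter_filter, Finset.filter_filter]
      exact Finset.filter_congr fun z _ => by tauto
    rw [e2, hFinF, hFoutF]
    congr 1
    · -- z ∈ Fin : z ⊆ insert l S ↔ z.erase l ⊆ S ; count via image by erase
      have einj : Set.InjOn (fun z : Finset α => z.erase l) Fin := by
        intro a ha b hb hab
        have hla : l ∈ a := ((mem_filter.1 ha).2).1
        have hlb : l ∈ b := ((mem_filter.1 hb).2).1
        rw [← insert_erase hla, ← insert_erase hlb]
        simpa using congrArg (insert l) hab
      rw [Finset.filter_image, Finset.card_image_of_injOn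
        (einj.mono (Finset.filter_subset _ _))]
      congr 1
      exact Finset.filter_congr fun z _ => Finset.subset_insert_iff
    · congr 1
      refine Finset.filter_congr fun z hz => ?_
      have hlz : l ∉ z := ((mem_filter.1 hz).2).1
      rw [Finset.subset_insert_iff_of_notMem hlz]
  -- sum the natural-number counts
  have hsumS : ∑ S ∈ u.powersetCard m,
      ((S.powersetCard k).filter (fun z => h z = yhat)).card
        = Fout.card * ((d - 1 - k).choose (m - k)) := by
    rw [Finset.sum_congr rfl hNS]
    have := aux_sum_card u Fout k m hkm ?_
    · rw [this, hucard]
    · intro z hz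
      simp only [hFout, mem_filter, mem_powersetCard] at hz
      exact ⟨subset_erase.2 ⟨hz.1.1, hz.2.1⟩, hz.1.2⟩
  have hsumiS : ∑ S ∈ u.powersetCard m,
      (((insert l S).powersetCard k).filter (fun z => h z = yhat)).card
        = Fin.card * ((d - k).choose (m - k + 1))
          + Fout.card * ((d - 1 - k).choose (m - k)) := by
    rw [Finset.sum_congr rfl hNiS, Finset.sum_add_distrib]
    congr 1
    · have einj : Set.InjOn (fun z : Finset α => z.erase l) Fin := by
        intro a ha b hb hab
        have hla : l ∈ a := ((mem_filter.1 ha).2).1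
        have hlb : l ∈ b := ((mem_filter.1 hb).2).1
        rw [← insert_erase hla, ← insert_erase hlb]
        simpa using congrArg (insert l) hab
      have := aux_sum_card u (Fin.image (fun z => z.erase l)) (k - 1) m (by omega) ?_
      · rw [this, Finset.card_image_of_injOn einj, hucard]
        congr 2 <;> omega
      · intro t ht
        obtain ⟨z, hz, rfl⟩ := Finset.mem_image.1 ht
        simp only [hFin, mem_filter, mem_powersetCard] at hz
        refine ⟨Finset.erase_subset_erase l hz.1.1, ?_⟩
        rw [card_erase_of_mem hz.2.1, hz.1.2]
    · have := aux_sum_card u Fout k m hkm ?_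
      · rw [this, hucard]
      · intro z hz
        simp only [hFout, mem_filter, mem_powersetCard] at hz
        exact ⟨subset_erase.2 ⟨hz.1.1, hz.2.1⟩, hz.1.2⟩
  -- assemble over ℝ
  rw [← Finset.sum_div, ← Finset.sum_div, ← Nat.cast_sum, ← Nat.cast_sum, hsumS, hsumiS]
  push_cast
  ring

/-- Order consistency with the size-`m` marginal contributions: if `A_i ≥ A_j`
then `Δ_i(m) ≥ Δ_j(m)` for every `k ≤ m ≤ d-1`. -/
theorem marginal_contribution_order_consistency {α L : Type*} [DecidableEq α] [DecidableEq L]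
    (x : Finset α) (d k m : ℕ) (h : Finset α → L) (yhat : L) (i j : α)
    (p : Finset α → ℝ)
    (hd : x.card = d) (hi : i ∈ x) (hj : j ∈ x) (hk1 : 1 ≤ k) (hkd : k ≤ d - 1)
    (hkm : k ≤ m) (hmd : m ≤ d - 1)
    (hp : ∀ T : Finset α, T ⊆ x → k ≤ T.card →
      p T = (((T.powersetCard k).filter (fun z => h z = yhat)).card : ℝ) /
        (T.card.choose k))
    (hA : ((x.powersetCard k).filter (fun z => j ∈ z ∧ h z = yhat)).card ≤
          ((x.powersetCard k).filter (fun z => i ∈ z ∧ h z = yhat)).card) :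
    ∑ S ∈ (x.erase j).powersetCard m, (p (insert j S) - p S)
    ≤ ∑ S ∈ (x.erase i).powersetCard m, (p (insert i S) - p S) := by
  rw [aux_delta x d k m h yhat i p hd hi hk1 hkd hkm hmd hp,
      aux_delta x d k m h yhat j p hd hj hk1 hkd hkm hmd hp]
  set F : Finset (Finset α) := (x.powersetCard k).filter (fun z => h z = yhat) with hF
  -- A_l + B_l = F.card for l = i, j
  have hsplit : ∀ l : α,
      ((x.powersetCard k).filter (fun z => l ∈ z ∧ h z = yhat)).card
        + ((x.powersetCard k).filter (fun z => l ∉ z ∧ h z = yhat)).card = F.card := by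
    intro l
    have h1 : (x.powersetCard k).filter (fun z => l ∈ z ∧ h z = yhat)
        = F.filter (fun z => l ∈ z) := by
      rw [hF, Finset.filter_filter]
      exact Finset.filter_congr fun z _ => by tauto
    have h2 : (x.powersetCard k).filter (fun z => l ∉ z ∧ h z = yhat)
        = F.filter (fun z => l ∉ z) := by
      rw [hF, Finset.filter_filter]
      exact Finset.filter_congr fun z _ => by tauto
    rw [h1, h2]
    exact Finset.card_filter_add_card_filter_not _
  set Ai := ((x.powersetCard k).filter (fun z => i ∈ z ∧ h z = yhat)).card with hAi
  set Bi := ((x.powersetCard k).filter (fun z => i ∉ z ∧ h z = yhat)).card with hBi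
  set Aj := ((x.powersetCard k).filter (fun z => j ∈ z ∧ h z = yhat)).card with hAj
  set Bj := ((x.powersetCard k).filter (fun z => j ∉ z ∧ h z = yhat)).card with hBj
  have hab : Ai + Bi = Aj + Bj := by rw [hsplit i, hsplit j]
  set Cm : ℝ := (m.choose k : ℝ) with hCmdef
  set Cm1 : ℝ := ((m + 1).choose k : ℝ) with hCm1def
  have hCm : (0 : ℝ) < Cm := by
    rw [hCmdef]; exact_mod_cast Nat.choose_pos hkm
  have hCm1 : (0 : ℝ) < Cm1 := by
    rw [hCm1def]; exact_mod_cast Nat.choose_pos (by omega : k ≤ m + 1)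
  have hle : Cm ≤ Cm1 := by
    rw [hCmdef, hCm1def]
    exact_mod_cast Nat.choose_le_choose k (Nat.le_succ m)
  set c : ℝ := ((d - k).choose (m - k + 1) : ℝ) with hc
  set e : ℝ := ((d - 1 - k).choose (m - k) : ℝ) with he
  have hc0 : 0 ≤ c := by positivity
  have he0 : 0 ≤ e := by positivity
  have haij : (Aj : ℝ) ≤ (Ai : ℝ) := by exact_mod_cast hA
  have hab' : (Ai : ℝ) + Bi = (Aj : ℝ) + Bj := by exact_mod_cast hab
  rw [add_div, add_div]
  have hfac : (1 / Cm1 - 1 / Cm : ℝ) ≤ 0 := by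
    rw [sub_nonpos]
    exact one_div_le_one_div_of_le hCm hle
  have hBe : (Bi : ℝ) * e ≤ (Bj : ℝ) * e :=
    mul_le_mul_of_nonneg_right (by linarith) he0
  have step2 : (Bj : ℝ) * e * (1 / Cm1 - 1 / Cm) ≤ (Bi : ℝ) * e * (1 / Cm1 - 1 / Cm) :=
    mul_le_mul_of_nonpos_right hBe hfac
  have step1 : (Aj : ℝ) * c / Cm1 ≤ (Ai : ℝ) * c / Cm1 := by
    gcongr
  have expand : ∀ y : ℝ, y / Cm1 - y / Cm = y * (1 / Cm1 - 1 / Cm) := fun y => by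
    rw [mul_sub, mul_one_div, mul_one_div]
  linarith [step1, step2, expand ((Bj : ℝ) * e), expand ((Bi : ℝ) * e)]
end

section
/- Let x be a finite set of d features, 1 ≤ k ≤ d−1, h a classifier with label set of size C, and ŷ a label. Define p_ŷ(S) = 1/C for |S| < k and p_ŷ(S) as the fraction of k-subsets of S classified ŷ otherwise. For m = k−1, the marginal contribution Δ_l(k−1) = Σ_{S ⊆ x\{l}, |S|=k−1} [p_ŷ(S∪{l}) − p_ŷ(S)] equals A_l − C(d−1,k−1)/C, where A_l is the number of k-subsets of x containing l with h(z)=ŷ. Consequently, A_i ≥ A_j if and only if Δ_i(k−1) ≥ Δ_j(k−1). -/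
/-- At subset size `m = k-1`, the marginal contribution is `Δ_l(k-1) = A_l − C(d-1,k-1)/C`,
so `A_i ≥ A_j` iff `Δ_i(k-1) ≥ Δ_j(k-1)`. -/
theorem marginal_contribution_at_km1 {α L : Type*} [DecidableEq α] [DecidableEq L]
    [Fintype L] (C : ℕ) (hC : Fintype.card L = C) (hC1 : 1 ≤ C)
    (x : Finset α) (d k : ℕ) (h : Finset α → L) (yhat : L) (i j : α)
    (p : Finset α → ℝ)
    (hd : x.card = d) (hi : i ∈ x) (hj : j ∈ x) (hk1 : 1 ≤ k) (hkd : k ≤ d - 1)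
    (hplt : ∀ T : Finset α, T ⊆ x → T.card < k → p T = 1 / C)
    (hpge : ∀ T : Finset α, T ⊆ x → k ≤ T.card →
      p T = (((T.powersetCard k).filter (fun z => h z = yhat)).card : ℝ) /
        (T.card.choose k)) :
    (∀ l ∈ x,
      ∑ S ∈ (x.erase l).powersetCard (k - 1), (p (insert l S) - p S)
      = (((x.powersetCard k).filter (fun z => l ∈ z ∧ h z = yhat)).card : ℝ)
        - ((d - 1).choose (k - 1) : ℝ) / C) ∧
    (((x.powersetCard k).filter (fun z => j ∈ z ∧ h z = yhat)).card ≤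
       ((x.powersetCard k).filter (fun z => i ∈ z ∧ h z = yhat)).card ↔
     ∑ S ∈ (x.erase j).powersetCard (k - 1), (p (insert j S) - p S)
       ≤ ∑ S ∈ (x.erase i).powersetCard (k - 1), (p (insert i S) - p S)) := by
  have key : ∀ l ∈ x,
      ∑ S ∈ (x.erase l).powersetCard (k - 1), (p (insert l S) - p S)
      = (((x.powersetCard k).filter (fun z => l ∈ z ∧ h z = yhat)).card : ℝ)
        - ((d - 1).choose (k - 1) : ℝ) / C := by
    intro l hl
    have hcarderase : (x.erase l).card = d - 1 := by
      rw [Finset.card_erase_of_mem hl, hd]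
    have hsum : ∑ S ∈ (x.erase l).powersetCard (k-1), (p (insert l S) - p S)
        = ∑ S ∈ (x.erase l).powersetCard (k-1),
            ((if h (insert l S) = yhat then (1:ℝ) else 0) - 1 / C) := by
      apply Finset.sum_congr rfl
      intro S hS
      rw [Finset.mem_powersetCard] at hS
      obtain ⟨hSsub, hScard⟩ := hS
      have hlS : l ∉ S := fun hmem => (Finset.mem_erase.mp (hSsub hmem)).1 rfl
      have hTsub : insert l S ⊆ x := by
        intro a ha
        rcases Finset.mem_insert.mp ha with rfl | ha
        · exact hl
        · exact Finset.erase_subset _ _ (hSsub ha)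
      have hTcard : (insert l S).card = k := by
        rw [Finset.card_insert_of_notMem hlS, hScard]; omega
      have hps : p S = 1 / C :=
        hplt S (hSsub.trans (Finset.erase_subset _ _)) (by omega)
      have hpT : p (insert l S) = if h (insert l S) = yhat then (1:ℝ) else 0 := by
        rw [hpge _ hTsub (le_of_eq hTcard.symm), hTcard,
          show Finset.powersetCard k (insert l S) = {insert l S} from by
            rw [← hTcard, Finset.powersetCard_self]]
        by_cases hh : h (insert l S) = yhat
        · simp [Finset.filter_singleton, hh, Nat.choose_self]
        · simp [Finset.filter_singleton, hh, Nat.choose_self]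
      rw [hps, hpT]
    rw [hsum, Finset.sum_sub_distrib, Finset.sum_boole, Finset.sum_const,
      Finset.card_powersetCard, hcarderase]
    have hcards : (((x.erase l).powersetCard (k-1)).filter
        (fun S => h (insert l S) = yhat)).card
        = ((x.powersetCard k).filter (fun z => l ∈ z ∧ h z = yhat)).card := by
      apply Finset.card_bij (fun S _ => insert l S)
      · intro S hS
        simp only [Finset.mem_filter, Finset.mem_powersetCard] at hS ⊢
        obtain ⟨⟨hSsub, hScard⟩, hh⟩ := hS
        have hlS : l ∉ S := fun hmem => (Finset.mem_erase.mp (hSsub hmem)).1 rfl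
        refine ⟨⟨?_, ?_⟩, Finset.mem_insert_self _ _, hh⟩
        · intro a ha
          rcases Finset.mem_insert.mp ha with rfl | ha
          · exact hl
          · exact Finset.erase_subset _ _ (hSsub ha)
        · rw [Finset.card_insert_of_notMem hlS, hScard]; omega
      · intro S1 h1 S2 h2 heq
        simp only [Finset.mem_filter, Finset.mem_powersetCard] at h1 h2
        have hl1 : l ∉ S1 := fun hmem => (Finset.mem_erase.mp (h1.1.1 hmem)).1 rfl
        have hl2 : l ∉ S2 := fun hmem => (Finset.mem_erase.mp (h2.1.1 hmem)).1 rfl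
        have := congrArg (Finset.erase · l) heq
        simpa [Finset.erase_insert hl1, Finset.erase_insert hl2] using this
      · intro z hz
        simp only [Finset.mem_filter, Finset.mem_powersetCard] at hz
        obtain ⟨⟨hzsub, hzcard⟩, hlz, hh⟩ := hz
        refine ⟨z.erase l, ?_, ?_⟩
        · simp only [Finset.mem_filter, Finset.mem_powersetCard]
          refine ⟨⟨?_, ?_⟩, ?_⟩
          · exact Finset.erase_subset_erase _ hzsub
          · rw [Finset.card_erase_of_mem hlz, hzcard]
          · rw [Finset.insert_erase hlz]; exact hh
        · exact Finset.insert_erase hlz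
    rw [hcards]
    push_cast
    ring
  refine ⟨key, ?_⟩
  rw [key i hi, key j hj]
  constructor
  · intro hle
    have : (((x.powersetCard k).filter (fun z => j ∈ z ∧ h z = yhat)).card : ℝ)
        ≤ ((x.powersetCard k).filter (fun z => i ∈ z ∧ h z = yhat)).card := by
      exact_mod_cast hle
    linarith
  · intro hle
    have : (((x.powersetCard k).filter (fun z => j ∈ z ∧ h z = yhat)).card : ℝ)
        ≤ ((x.powersetCard k).filter (fun z => i ∈ z ∧ h z = yhat)).card := by
      linarith
    exact_mod_cast this
end

section
/- Let x be a finite set of d features, 1 ≤ k ≤ d−1, h a classifier on subsets of x, and ŷ a label. For any two features i and j, the full Shapley value order consistency holds: α_i ≥ α_j if and only if φ_i ≥ φ_j, where α_l = (1/k)·(1/C(d,k))·A_l is the EnsembleSHAP importance score (A_l counting k-subsets containing l classified ŷ), and φ_l = Σ_{m=0}^{d−1} (m!(d−m−1)!/d!) · Δ_l(m) is the Shapley value of the game whose value function sends S to p_ŷ(S) (with p_ŷ(S) = 1/C when |S| < k). -/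
/-! Double counting shows that `Δ_l(m)` equals `κ(m) + c₁(m) A_l - c₂(m) B_l`, where `A_l` and
`B_l` count the `k`-subsets classified `ŷ` that contain, resp. avoid, `l`, and where `κ`, `c₁ ≥ 0`
and `c₂ ≥ 0` do not depend on `l`. Since `A_l + B_l` does not depend on `l` either,
`φ_i - φ_j = s (A_i - A_j)` with `s = Σ_m w(m) (c₁(m) + c₂(m))`, and `s > 0` because
`c₁(k - 1) = 1`. As `α_i - α_j` is also a positive multiple of `A_i - A_j`, the two orders agree. -/

open Finset

section Counting

variable {α : Type*} [DecidableEq α]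

/-- The complement form of the binomial coefficient also covers `n < #s`, where both sides
vanish. -/
theorem card_filter_powersetCard_subset_eq_choose_sub {s t : Finset α} {n : ℕ} (hst : s ⊆ t)
    (hn : n ≤ #t) : #{S ∈ t.powersetCard n | s ⊆ S} = (#t - #s).choose (#t - n) := by
  have hs : #s ≤ #t := card_le_card hst
  rcases le_or_gt #s n with hsn | hns
  · rw [card_filter_powersetCard_subset s t n hst hsn]
    exact Nat.choose_symm_of_eq_add (by omega)
  · rw [Nat.choose_eq_zero_of_lt (by omega), card_eq_zero, filter_eq_empty_iff]
    intro S hS hsS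
    have := card_le_card hsS
    rw [(mem_powersetCard.1 hS).2] at this
    omega

theorem filter_powersetCard_eq_filter_subset {T x : Finset α} (hT : T ⊆ x) (k : ℕ)
    (P : Finset α → Prop) [DecidablePred P] :
    {z ∈ T.powersetCard k | P z} = {z ∈ {z ∈ x.powersetCard k | P z} | z ⊆ T} := by
  ext z
  simp only [mem_filter, mem_powersetCard]
  exact ⟨fun ⟨⟨hzT, hz⟩, hP⟩ => ⟨⟨⟨hzT.trans hT, hz⟩, hP⟩, hzT⟩,
    fun ⟨⟨⟨_, hz⟩, hP⟩, hzT⟩ => ⟨⟨hzT, hz⟩, hP⟩⟩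

variable {x : Finset α} {G : Finset (Finset α)} {k m : ℕ} {l : α}

theorem sum_card_filter_subset_insert (hG : G ⊆ x.powersetCard k) (hl : l ∈ x) (hk : 1 ≤ k)
    (hm : m < #x) :
    ∑ S ∈ (x.erase l).powersetCard m, #{z ∈ G | z ⊆ insert l S} =
      #{z ∈ G | l ∈ z} * (#x - k).choose (#x - 1 - m) +
        #{z ∈ G | l ∉ z} * (#x - 1 - k).choose (#x - 1 - m) := by
  have hxl : #(x.erase l) = #x - 1 := card_erase_of_mem hl
  have hcount : ∀ z ∈ G, #{S ∈ (x.erase l).powersetCard m | z.erase l ⊆ S} =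
      (#x - 1 - #(z.erase l)).choose (#x - 1 - m) := fun z hz => by
    rw [← hxl]
    exact card_filter_powersetCard_subset_eq_choose_sub
      (erase_subset_erase l (mem_powersetCard.1 (hG hz)).1) (by omega)
  simp only [subset_insert_iff]
  rw [show ∑ S ∈ (x.erase l).powersetCard m, #{z ∈ G | z.erase l ⊆ S} =
      ∑ z ∈ G, #{S ∈ (x.erase l).powersetCard m | z.erase l ⊆ S} by
    simp only [card_filter]; exact sum_comm]
  rw [← sum_filter_add_sum_filter_not G (l ∈ ·)]
  congr 1
  · refine sum_const_nat fun z hz => ?_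
    obtain ⟨hzG, hlz⟩ := mem_filter.1 hz
    rw [hcount z hzG, card_erase_of_mem hlz, (mem_powersetCard.1 (hG hzG)).2,
      show #x - 1 - (k - 1) = #x - k by omega]
  · refine sum_const_nat fun z hz => ?_
    obtain ⟨hzG, hlz⟩ := mem_filter.1 hz
    rw [hcount z hzG, erase_eq_of_notMem hlz, (mem_powersetCard.1 (hG hzG)).2]

theorem sum_card_filter_subset (hG : G ⊆ x.powersetCard k) (hl : l ∈ x) (hm : m < #x) :
    ∑ S ∈ (x.erase l).powersetCard m, #{z ∈ G | z ⊆ S} =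
      #{z ∈ G | l ∉ z} * (#x - 1 - k).choose (#x - 1 - m) := by
  rw [show ∑ S ∈ (x.erase l).powersetCard m, #{z ∈ G | z ⊆ S} =
      ∑ z ∈ G, #{S ∈ (x.erase l).powersetCard m | z ⊆ S} by
    simp only [card_filter]; exact sum_comm]
  rw [← sum_filter_add_sum_filter_not G (l ∈ ·), sum_eq_zero, zero_add]
  · refine sum_const_nat fun z hz => ?_
    obtain ⟨hzG, hlz⟩ := mem_filter.1 hz
    obtain ⟨hzx, hzk⟩ := mem_powersetCard.1 (hG hzG)
    rw [card_filter_powersetCard_subset_eq_choose_sub (subset_erase.2 ⟨hzx, hlz⟩)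
      (by rw [card_erase_of_mem hl]; omega), card_erase_of_mem hl, hzk]
  · intro z hz
    rw [card_eq_zero, filter_eq_empty_iff]
    intro S hS hzS
    exact notMem_erase l x ((mem_powersetCard.1 hS).1 (hzS (mem_filter.1 hz).2))

end Counting

noncomputable section Shapley

variable {α : Type*} [DecidableEq α]

/-- The value function `p_ŷ`, with `G` the `k`-subsets classified `ŷ` and `c = 1 / C`; when
`#T < k` the fraction is `0 / 0 = 0`. -/
def IsSubsetFraction (x : Finset α) (G : Finset (Finset α)) (k : ℕ) (c : ℝ)
    (p : Finset α → ℝ) : Prop :=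
  ∀ T ⊆ x, p T = (if #T < k then c else 0) + #{z ∈ G | z ⊆ T} / (#T).choose k

def marginalSum (p : Finset α → ℝ) (x : Finset α) (l : α) (m : ℕ) : ℝ :=
  ∑ S ∈ (x.erase l).powersetCard m, (p (insert l S) - p S)

def shapleyWeight (d m : ℕ) : ℝ := (m.factorial * (d - m - 1).factorial : ℝ) / d.factorial

def shapleyValue (p : Finset α → ℝ) (x : Finset α) (l : α) : ℝ :=
  ∑ m ∈ range #x, shapleyWeight #x m * marginalSum p x l m

def marginalCoeffIn (d k m : ℕ) : ℝ := (d - k).choose (d - 1 - m) / (m + 1).choose k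

def marginalCoeffOut (d k m : ℕ) : ℝ :=
  (d - 1 - k).choose (d - 1 - m) * (1 / m.choose k - 1 / (m + 1).choose k)

def shapleySlope (d k : ℕ) : ℝ :=
  ∑ m ∈ range d, shapleyWeight d m * (marginalCoeffIn d k m + marginalCoeffOut d k m)

variable {x : Finset α} {G : Finset (Finset α)} {k m : ℕ} {l : α} {p : Finset α → ℝ} {c : ℝ}

theorem isSubsetFraction_of_card_lt_of_le_card (hp_lt : ∀ T ⊆ x, #T < k → p T = c)
    (hp_ge : ∀ T ⊆ x, k ≤ #T → p T = #{z ∈ G | z ⊆ T} / (#T).choose k) :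
    IsSubsetFraction x G k c p := by
  intro T hT
  by_cases hTk : #T < k
  · rw [if_pos hTk, hp_lt T hT hTk, Nat.choose_eq_zero_of_lt hTk, Nat.cast_zero, div_zero,
      add_zero]
  · rw [if_neg hTk, hp_ge T hT (by omega), zero_add]

theorem IsSubsetFraction.marginalSum_eq (hp : IsSubsetFraction x G k c p)
    (hG : G ⊆ x.powersetCard k) (hl : l ∈ x) (hk : 1 ≤ k) (hm : m < #x) :
    marginalSum p x l m =
      ((if m + 1 < k then c else 0) - (if m < k then c else 0)) * (#x - 1).choose m +
        marginalCoeffIn #x k m * #{z ∈ G | l ∈ z} -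
          marginalCoeffOut #x k m * #{z ∈ G | l ∉ z} := by
  have hsum : ∀ (f : Finset α → Finset α) (n : ℕ),
      (∀ S ∈ (x.erase l).powersetCard m, f S ⊆ x ∧ #(f S) = n) →
      ∑ S ∈ (x.erase l).powersetCard m, p (f S) =
        (if n < k then c else 0) * (#x - 1).choose m +
          (∑ S ∈ (x.erase l).powersetCard m, #{z ∈ G | z ⊆ f S} : ℕ) / n.choose k := by
    intro f n hf
    rw [sum_congr rfl fun S hS => by rw [hp _ (hf S hS).1, (hf S hS).2], sum_add_distrib,
      sum_const, card_powersetCard, card_erase_of_mem hl, nsmul_eq_mul, ← sum_div, Nat.cast_sum,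
      mul_comm]
  have hS : ∀ S ∈ (x.erase l).powersetCard m, S ⊆ x ∧ l ∉ S ∧ #S = m := fun S hS => by
    obtain ⟨hSx, hSm⟩ := mem_powersetCard.1 hS
    exact ⟨hSx.trans (erase_subset l x), fun hlS => notMem_erase l x (hSx hlS), hSm⟩
  rw [marginalSum, sum_sub_distrib,
    hsum (insert l ·) (m + 1) fun S h => ⟨insert_subset hl (hS S h).1,
      by rw [card_insert_of_notMem (hS S h).2.1, (hS S h).2.2]⟩,
    hsum (fun S => S) m fun S h => ⟨(hS S h).1, (hS S h).2.2⟩,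
    sum_card_filter_subset_insert hG hl hk hm, sum_card_filter_subset hG hl hm,
    marginalCoeffIn, marginalCoeffOut]
  push_cast
  ring

theorem IsSubsetFraction.marginalSum_sub_marginalSum {i j : α} (hp : IsSubsetFraction x G k c p)
    (hG : G ⊆ x.powersetCard k) (hi : i ∈ x) (hj : j ∈ x) (hk : 1 ≤ k) (hm : m < #x) :
    marginalSum p x i m - marginalSum p x j m =
      (marginalCoeffIn #x k m + marginalCoeffOut #x k m) *
        (#{z ∈ G | i ∈ z} - #{z ∈ G | j ∈ z} : ℝ) := by
  have hout : ∀ l, (#{z ∈ G | l ∉ z} : ℝ) = #G - #{z ∈ G | l ∈ z} := fun l => by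
    rw [← card_filter_add_card_filter_not (s := G) (l ∈ ·), Nat.cast_add]
    ring
  rw [hp.marginalSum_eq hG hi hk hm, hp.marginalSum_eq hG hj hk hm, hout, hout]
  ring

theorem IsSubsetFraction.shapleyValue_sub_shapleyValue {i j : α} (hp : IsSubsetFraction x G k c p)
    (hG : G ⊆ x.powersetCard k) (hi : i ∈ x) (hj : j ∈ x) (hk : 1 ≤ k) :
    shapleyValue p x i - shapleyValue p x j =
      shapleySlope #x k * (#{z ∈ G | i ∈ z} - #{z ∈ G | j ∈ z} : ℝ) := by
  rw [shapleyValue, shapleyValue, shapleySlope, ← sum_sub_distrib, sum_mul]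
  refine sum_congr rfl fun m hm => ?_
  rw [← mul_sub, hp.marginalSum_sub_marginalSum hG hi hj hk (mem_range.1 hm), mul_assoc]

theorem shapleyWeight_pos (d m : ℕ) : 0 < shapleyWeight d m := by
  unfold shapleyWeight
  positivity

theorem marginalCoeffIn_nonneg (d k m : ℕ) : 0 ≤ marginalCoeffIn d k m := by
  unfold marginalCoeffIn
  positivity

theorem marginalCoeffIn_pred (d : ℕ) {k : ℕ} (hk : 1 ≤ k) : marginalCoeffIn d k (k - 1) = 1 := by
  rw [marginalCoeffIn, Nat.sub_add_cancel hk, show d - 1 - (k - 1) = d - k by omega,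
    Nat.choose_self, Nat.choose_self, Nat.cast_one, div_one]

theorem marginalCoeffOut_nonneg {d k : ℕ} (hkd : k < d) (m : ℕ) : 0 ≤ marginalCoeffOut d k m := by
  rw [marginalCoeffOut]
  rcases lt_or_ge m k with hmk | hkm
  · rw [Nat.choose_eq_zero_of_lt (by omega : d - 1 - k < d - 1 - m), Nat.cast_zero, zero_mul]
  · have hpos : (0 : ℝ) < m.choose k := by exact_mod_cast Nat.choose_pos hkm
    have hle : (m.choose k : ℝ) ≤ (m + 1).choose k := by
      exact_mod_cast Nat.choose_le_choose k m.le_succ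
    exact mul_nonneg (Nat.cast_nonneg _) (sub_nonneg.2 (one_div_le_one_div_of_le hpos hle))

theorem shapleySlope_pos {d k : ℕ} (hk : 1 ≤ k) (hkd : k < d) : 0 < shapleySlope d k := by
  refine sum_pos' (fun m _ => ?_) ⟨k - 1, mem_range.2 (by omega), ?_⟩
  · exact mul_nonneg (shapleyWeight_pos d m).le
      (add_nonneg (marginalCoeffIn_nonneg d k m) (marginalCoeffOut_nonneg hkd m))
  · rw [marginalCoeffIn_pred d hk]
    exact mul_pos (shapleyWeight_pos d _) (by linarith [marginalCoeffOut_nonneg hkd (k - 1)])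

end Shapley

theorem ensembleSHAP_shapley_order_consistency_general {α L : Type*} [DecidableEq α] [DecidableEq L]
    (C : ℕ)
    (x : Finset α) (d k : ℕ) (h : Finset α → L) (yhat : L) (i j : α)
    (p : Finset α → ℝ)
    (hd : x.card = d) (hi : i ∈ x) (hj : j ∈ x) (hk1 : 1 ≤ k) (hkd : k ≤ d - 1)
    (hplt : ∀ T : Finset α, T ⊆ x → T.card < k → p T = 1 / C)
    (hpge : ∀ T : Finset α, T ⊆ x → k ≤ T.card →
      p T = (((T.powersetCard k).filter (fun z => h z = yhat)).card : ℝ) /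
        (T.card.choose k)) :
    ((1 : ℝ) / k) * (1 / (d.choose k)) *
        (((x.powersetCard k).filter (fun z => j ∈ z ∧ h z = yhat)).card : ℝ)
      ≤ ((1 : ℝ) / k) * (1 / (d.choose k)) *
        (((x.powersetCard k).filter (fun z => i ∈ z ∧ h z = yhat)).card : ℝ)
    ↔
    ∑ m ∈ Finset.range d, ((m.factorial * (d - m - 1).factorial : ℝ) / d.factorial) *
        (∑ S ∈ (x.erase j).powersetCard m, (p (insert j S) - p S))
      ≤ ∑ m ∈ Finset.range d, ((m.factorial * (d - m - 1).factorial : ℝ) / d.factorial) *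
        (∑ S ∈ (x.erase i).powersetCard m, (p (insert i S) - p S)) := by
  subst hd
  change _ ↔ shapleyValue p x j ≤ shapleyValue p x i
  set G := {z ∈ x.powersetCard k | h z = yhat}
  have hp : IsSubsetFraction x G k (1 / C) p := isSubsetFraction_of_card_lt_of_le_card hplt
    fun T hT hkT => by rw [hpge T hT hkT, filter_powersetCard_eq_filter_subset hT]
  have hA : ∀ l, {z ∈ x.powersetCard k | l ∈ z ∧ h z = yhat} = {z ∈ G | l ∈ z} := fun l => by
    rw [filter_filter]
    simp only [and_comm]
  have hscore : (0 : ℝ) < 1 / k * (1 / (#x).choose k) := by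
    have := Nat.choose_pos (show k ≤ #x by omega)
    positivity
  rw [hA, hA, ← sub_nonneg, ← mul_sub, mul_nonneg_iff_of_pos_left hscore,
    ← sub_nonneg (b := shapleyValue p x j), hp.shapleyValue_sub_shapleyValue (filter_subset _ _)
      hi hj hk1, mul_nonneg_iff_of_pos_left (shapleySlope_pos hk1 (by omega))]

/-- Full order consistency of EnsembleSHAP with the Shapley value: `α_i ≥ α_j` iff
`φ_i ≥ φ_j`, where `φ_l = Σ_{m=0}^{d-1} (m!(d-m-1)!/d!) · Δ_l(m)` is the Shapley value of
the game with value function `p_ŷ` (with `p_ŷ(S) = 1/C` when `|S| < k`). -/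
theorem ensembleSHAP_shapley_order_consistency {α L : Type*} [DecidableEq α] [DecidableEq L]
    [Fintype L] (C : ℕ) (hC : Fintype.card L = C) (hC1 : 1 ≤ C)
    (x : Finset α) (d k : ℕ) (h : Finset α → L) (yhat : L) (i j : α)
    (p : Finset α → ℝ)
    (hd : x.card = d) (hi : i ∈ x) (hj : j ∈ x) (hk1 : 1 ≤ k) (hkd : k ≤ d - 1)
    (hplt : ∀ T : Finset α, T ⊆ x → T.card < k → p T = 1 / C)
    (hpge : ∀ T : Finset α, T ⊆ x → k ≤ T.card →
      p T = (((T.powersetCard k).filter (fun z => h z = yhat)).card : ℝ) /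
        (T.card.choose k)) :
    ((1 : ℝ) / k) * (1 / (d.choose k)) *
        (((x.powersetCard k).filter (fun z => j ∈ z ∧ h z = yhat)).card : ℝ)
      ≤ ((1 : ℝ) / k) * (1 / (d.choose k)) *
        (((x.powersetCard k).filter (fun z => i ∈ z ∧ h z = yhat)).card : ℝ)
    ↔
    ∑ m ∈ Finset.range d, ((m.factorial * (d - m - 1).factorial : ℝ) / d.factorial) *
        (∑ S ∈ (x.erase j).powersetCard m, (p (insert j S) - p S))
      ≤ ∑ m ∈ Finset.range d, ((m.factorial * (d - m - 1).factorial : ℝ) / d.factorial) *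
        (∑ S ∈ (x.erase i).powersetCard m, (p (insert i S) - p S)) :=
  ensembleSHAP_shapley_order_consistency_general C x d k h yhat i j p hd hi hj hk1 hkd hplt hpge
end

section
/- Let x be a finite set of d features and P ⊆ x a set of at most T perturbed features, with 1 ≤ k ≤ d. For any feature v ∈ x \ P, the number of k-subsets of x containing v that intersect P is at most C(d−1,k−1) − C(d−1−T,k−1). Consequently, if two classifiers h and h' agree on every k-subset disjoint from P, then the importance score of v can change by at most (1/k)·(C(d−1,k−1) − C(d−1−T,k−1))/C(d,k). -/
lemma count_mem_card {α : Type*} [DecidableEq α] (s : Finset α) (v : α) (hv : v ∈ s)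
    (k : ℕ) (hk : 1 ≤ k) :
    ((s.powersetCard k).filter (fun z => v ∈ z)).card = (s.card - 1).choose (k - 1) := by
  rw [← Finset.card_erase_of_mem hv, ← Finset.card_powersetCard]
  apply Finset.card_bij' (fun z _ => z.erase v) (fun w _ => insert v w)
  · intro z hz
    simp only [Finset.mem_filter] at hz
    exact Finset.insert_erase hz.2
  · intro w hw
    simp only [Finset.mem_powersetCard] at hw
    have hvw : v ∉ w := fun hm => (Finset.mem_erase.mp (hw.1 hm)).1 rfl
    exact Finset.erase_insert hvw
  · intro z hz
    simp only [Finset.mem_filter, Finset.mem_powersetCard] at hz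
    simp only [Finset.mem_powersetCard]
    constructor
    · intro a ha
      simp only [Finset.mem_erase] at ha ⊢
      exact ⟨ha.1, hz.1.1 ha.2⟩
    · rw [Finset.card_erase_of_mem hz.2, hz.1.2]
  · intro w hw
    simp only [Finset.mem_powersetCard] at hw
    simp only [Finset.mem_filter, Finset.mem_powersetCard]
    have hvw : v ∉ w := fun hm => (Finset.mem_erase.mp (hw.1 hm)).1 rfl
    refine ⟨⟨?_, ?_⟩, Finset.mem_insert_self _ _⟩
    · intro a ha
      rcases Finset.mem_insert.mp ha with rfl | ha
      · exact hv
      · exact (Finset.mem_erase.mp (hw.1 ha)).2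
    · rw [Finset.card_insert_of_notMem hvw, hw.2]
      omega

/-- For an unperturbed feature `v`, at most `C(d-1,k-1) − C(d-1-T,k-1)` of the `k`-subsets
containing `v` intersect the perturbation set `P`; hence if two classifiers agree on all
`k`-subsets disjoint from `P`, the importance score of `v` changes by at most
`(1/k)·(C(d-1,k-1) − C(d-1-T,k-1))/C(d,k)`. -/
theorem importance_change_bound_unperturbed {α L : Type*} [DecidableEq α] [DecidableEq L]
    (x : Finset α) (d k T : ℕ) (P : Finset α) (v : α)
    (h h' : Finset α → L) (yhat : L)
    (hd : x.card = d) (hP : P ⊆ x) (hT : P.card ≤ T) (hk1 : 1 ≤ k) (hkd : k ≤ d)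
    (hv : v ∈ x) (hvP : v ∉ P)
    (hagree : ∀ z ∈ x.powersetCard k, z ∩ P = ∅ → h z = h' z) :
    (((x.powersetCard k).filter (fun z => v ∈ z ∧ z ∩ P ≠ ∅)).card
      ≤ (d - 1).choose (k - 1) - (d - 1 - T).choose (k - 1)) ∧
    |((1 : ℝ) / k) * (1 / (d.choose k)) *
        (((x.powersetCard k).filter (fun z => v ∈ z ∧ h' z = yhat)).card : ℝ)
      - ((1 : ℝ) / k) * (1 / (d.choose k)) *
        (((x.powersetCard k).filter (fun z => v ∈ z ∧ h z = yhat)).card : ℝ)|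
      ≤ ((1 : ℝ) / k) *
        (((d - 1).choose (k - 1) : ℝ) - ((d - 1 - T).choose (k - 1) : ℝ)) /
        (d.choose k) := by
  classical
  set S := (x.powersetCard k).filter (fun z => v ∈ z ∧ z ∩ P ≠ ∅) with hS
  -- total k-subsets containing v
  have htot : ((x.powersetCard k).filter (fun z => v ∈ z)).card = (d - 1).choose (k - 1) := by
    rw [count_mem_card x v hv k hk1, hd]
  -- k-subsets containing v and disjoint from P
  have hdisjset : (x.powersetCard k).filter (fun z => v ∈ z ∧ z ∩ P = ∅)
      = ((x \ P).powersetCard k).filter (fun z => v ∈ z) := by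
    ext z
    simp only [Finset.mem_filter, Finset.mem_powersetCard]
    constructor
    · rintro ⟨⟨hzx, hzk⟩, hvz, hzP⟩
      refine ⟨⟨fun a ha => Finset.mem_sdiff.mpr ⟨hzx ha, ?_⟩, hzk⟩, hvz⟩
      intro haP
      exact (Finset.notMem_empty a) (hzP ▸ Finset.mem_inter.mpr ⟨ha, haP⟩)
    · rintro ⟨⟨hzx, hzk⟩, hvz⟩
      refine ⟨⟨fun a ha => (Finset.mem_sdiff.mp (hzx ha)).1, hzk⟩, hvz, ?_⟩
      ext a
      simp only [Finset.mem_inter, Finset.notMem_empty, iff_false, not_and]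
      exact fun ha => (Finset.mem_sdiff.mp (hzx ha)).2
  have hvxP : v ∈ x \ P := Finset.mem_sdiff.mpr ⟨hv, hvP⟩
  have hdisj : ((x.powersetCard k).filter (fun z => v ∈ z ∧ z ∩ P = ∅)).card
      = (x.card - P.card - 1).choose (k - 1) := by
    rw [hdisjset, count_mem_card (x \ P) v hvxP k hk1, Finset.card_sdiff_of_subset hP]
  -- partition
  have hsplit : ((x.powersetCard k).filter (fun z => v ∈ z ∧ z ∩ P = ∅)).card + S.card
      = (d - 1).choose (k - 1) := by
    rw [← htot, hS]
    rw [← Finset.card_filter_add_card_filter_not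
      (s := (x.powersetCard k).filter (fun z => v ∈ z)) (p := fun z => z ∩ P = ∅)]
    rw [Finset.filter_filter, Finset.filter_filter]
  have hmono : (d - 1 - T).choose (k - 1) ≤ (x.card - P.card - 1).choose (k - 1) :=
    Nat.choose_le_choose _ (by omega)
  have part1 : S.card ≤ (d - 1).choose (k - 1) - (d - 1 - T).choose (k - 1) := by
    omega
  refine ⟨part1, ?_⟩
  -- Part 2
  set A := (x.powersetCard k).filter (fun z => v ∈ z ∧ h z = yhat) with hA
  set A' := (x.powersetCard k).filter (fun z => v ∈ z ∧ h' z = yhat) with hA'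
  have hsub : ∀ (f g : Finset α → L), (∀ z ∈ x.powersetCard k, z ∩ P = ∅ → f z = g z) →
      (x.powersetCard k).filter (fun z => v ∈ z ∧ f z = yhat)
        ⊆ (x.powersetCard k).filter (fun z => v ∈ z ∧ g z = yhat) ∪ S := by
    intro f g hfg z hz
    simp only [Finset.mem_filter] at hz
    by_cases hzP : z ∩ P = ∅
    · exact Finset.mem_union_left _ (Finset.mem_filter.mpr
        ⟨hz.1, hz.2.1, (hfg z hz.1 hzP) ▸ hz.2.2⟩)
    · exact Finset.mem_union_right _ (Finset.mem_filter.mpr ⟨hz.1, hz.2.1, hzP⟩)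
  have h1 : A'.card ≤ A.card + S.card := by
    calc A'.card ≤ (A ∪ S).card :=
          Finset.card_le_card (hsub h' h (fun z hz hzP => (hagree z hz hzP).symm))
      _ ≤ A.card + S.card := Finset.card_union_le _ _
  have h2 : A.card ≤ A'.card + S.card := by
    calc A.card ≤ (A' ∪ S).card := Finset.card_le_card (hsub h h' hagree)
      _ ≤ A'.card + S.card := Finset.card_union_le _ _
  have habs : |(A'.card : ℝ) - (A.card : ℝ)| ≤ (S.card : ℝ) := by
    have c1 : (A'.card : ℝ) ≤ (A.card : ℝ) + (S.card : ℝ) := by exact_mod_cast h1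
    have c2 : (A.card : ℝ) ≤ (A'.card : ℝ) + (S.card : ℝ) := by exact_mod_cast h2
    rw [abs_sub_le_iff]
    constructor <;> linarith
  have hC2le : (d - 1 - T).choose (k - 1) ≤ (d - 1).choose (k - 1) :=
    Nat.choose_le_choose _ (by omega)
  have hScast : (S.card : ℝ) ≤ ((d - 1).choose (k - 1) : ℝ) - ((d - 1 - T).choose (k - 1) : ℝ) := by
    have : (S.card : ℝ) ≤ (((d - 1).choose (k - 1) - (d - 1 - T).choose (k - 1) : ℕ) : ℝ) :=
      Nat.cast_le.mpr part1
    rwa [Nat.cast_sub hC2le] at this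
  have hCpos : (0 : ℝ) < (d.choose k : ℝ) := by
    exact_mod_cast Nat.choose_pos hkd
  have hkpos : (0 : ℝ) < (k : ℝ) := by exact_mod_cast hk1
  have hfac : (0 : ℝ) ≤ (1 / (k : ℝ)) * (1 / (d.choose k : ℝ)) := by positivity
  calc |((1 : ℝ) / k) * (1 / (d.choose k)) * (A'.card : ℝ)
        - ((1 : ℝ) / k) * (1 / (d.choose k)) * (A.card : ℝ)|
      = (1 / (k : ℝ)) * (1 / (d.choose k : ℝ)) * |(A'.card : ℝ) - (A.card : ℝ)| := by
        rw [← mul_sub, abs_mul, abs_of_nonneg hfac]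
    _ ≤ (1 / (k : ℝ)) * (1 / (d.choose k : ℝ)) *
        (((d - 1).choose (k - 1) : ℝ) - ((d - 1 - T).choose (k - 1) : ℝ)) := by
        exact mul_le_mul_of_nonneg_left (le_trans habs hScast) hfac
    _ = ((1 : ℝ) / k) *
        (((d - 1).choose (k - 1) : ℝ) - ((d - 1 - T).choose (k - 1) : ℝ)) /
        (d.choose k) := by ring
end

section
/- Let x be a finite set of d features, 1 ≤ k ≤ d, and h, h' two classifiers on k-subsets of x. Let ŷ and ŷ' be two distinct labels with p_ŷ(h) > p_{ŷ'}(h) (where p_c(f) is the fraction of k-subsets classified c by f). If p_{ŷ'}(h') > p_ŷ(h'), then the number of k-subsets z with h(z) ≠ h'(z) is at least (1/2)·C(d,k)·(p_ŷ(h) − p_{ŷ'}(h)). -/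
/-- Flipping the majority label from `ŷ` to `ŷ'` requires changing the predictions of at
least `(Δ/2)·C(d,k)` of the `k`-subsets, where `Δ = p_ŷ(h) − p_ŷ'(h)`. -/
theorem label_flip_requires_many_changes {α L : Type*} [DecidableEq α] [DecidableEq L]
    (x : Finset α) (d k : ℕ) (h h' : Finset α → L) (yhat yhat' : L)
    (hd : x.card = d) (hk1 : 1 ≤ k) (hkd : k ≤ d) (hy : yhat ≠ yhat')
    (hgap : (1 / (d.choose k) : ℝ) *
        (((x.powersetCard k).filter (fun z => h z = yhat')).card : ℝ)
      < (1 / (d.choose k) : ℝ) *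
        (((x.powersetCard k).filter (fun z => h z = yhat)).card : ℝ))
    (hflip : (1 / (d.choose k) : ℝ) *
        (((x.powersetCard k).filter (fun z => h' z = yhat)).card : ℝ)
      < (1 / (d.choose k) : ℝ) *
        (((x.powersetCard k).filter (fun z => h' z = yhat')).card : ℝ)) :
    ((1 : ℝ) / 2) * (d.choose k : ℝ) *
        ((1 / (d.choose k) : ℝ) *
            (((x.powersetCard k).filter (fun z => h z = yhat)).card : ℝ)
          - (1 / (d.choose k) : ℝ) *
            (((x.powersetCard k).filter (fun z => h z = yhat')).card : ℝ))
      ≤ (((x.powersetCard k).filter (fun z => h z ≠ h' z)).card : ℝ) := by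
  classical
  set s := x.powersetCard k with hs
  set A := s.filter (fun z => h z = yhat) with hA
  set B := s.filter (fun z => h z = yhat') with hB
  set A' := s.filter (fun z => h' z = yhat) with hA'
  set B' := s.filter (fun z => h' z = yhat') with hB'
  set D := s.filter (fun z => h z ≠ h' z) with hD
  have hc : (0:ℝ) < (d.choose k : ℝ) := by exact_mod_cast Nat.choose_pos hkd
  have hpos : (0:ℝ) < 1 / (d.choose k : ℝ) := by positivity
  have hba : (B.card:ℝ) < A.card := lt_of_mul_lt_mul_left hgap hpos.le
  have hab' : (A'.card:ℝ) < B'.card := lt_of_mul_lt_mul_left hflip hpos.le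
  have h1 : A.card ≤ A'.card + D.card := by
    calc A.card ≤ (A' ∪ D).card := by
          apply Finset.card_le_card
          intro z hz
          rw [hA, Finset.mem_filter] at hz
          by_cases hzz : h' z = yhat
          · exact Finset.mem_union_left _ (Finset.mem_filter.2 ⟨hz.1, hzz⟩)
          · exact Finset.mem_union_right _ (Finset.mem_filter.2 ⟨hz.1, by
              simp only [hz.2]; exact fun e => hzz e.symm⟩)
      _ ≤ A'.card + D.card := Finset.card_union_le _ _
  have h2 : B'.card ≤ B.card + D.card := by
    calc B'.card ≤ (B ∪ D).card := by
          apply Finset.card_le_card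
          intro z hz
          rw [hB', Finset.mem_filter] at hz
          by_cases hzz : h z = yhat'
          · exact Finset.mem_union_left _ (Finset.mem_filter.2 ⟨hz.1, hzz⟩)
          · exact Finset.mem_union_right _ (Finset.mem_filter.2 ⟨hz.1, by
              simp only [hz.2]; exact hzz⟩)
      _ ≤ B.card + D.card := Finset.card_union_le _ _
  have h1' : (A.card:ℝ) ≤ A'.card + D.card := by exact_mod_cast h1
  have h2' : (B'.card:ℝ) ≤ B.card + D.card := by exact_mod_cast h2
  have key : ((1 : ℝ) / 2) * (d.choose k : ℝ) *
      ((1 / (d.choose k) : ℝ) * (A.card : ℝ) - (1 / (d.choose k) : ℝ) * (B.card : ℝ))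
      = ((A.card : ℝ) - B.card) / 2 := by
    field_simp
  rw [key]
  linarith
end
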